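/- Suppose N = 2^M where M is an integer with M ≥ 2. Then the samples of the PBL signal are uniquely identifiable up to an integer constant vector from the modulo samples if and only if 2^{M−2} ≥ P+1 (equivalently, N/4 ≥ P+1). -/
import Mathlib

open Complex Polynomial Finset

/-- `y : Fin N → ℝ` is a length-`N` sample vector of a periodic bandlimited signal with
`P` harmonics: `y n = ∑_{p=-P}^{P} c p · exp(2πi·n·p/N)` with `c (-p) = conj (c p)`. -/
def IsPBLSample (P N : ℕ) (y : Fin N → ℝ) : Prop :=
  ∃ c : ℤ → ℂ, (∀ p : ℤ, c (-p) = (starRingEnd ℂ) (c p)) ∧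
    ∀ n : Fin N, (y n : ℂ) =
      ∑ p ∈ Finset.Icc (-(P : ℤ)) (P : ℤ),
        c p * Complex.exp (2 * Real.pi * Complex.I * (n : ℕ) * p / N)

/-- The samples of the PBL signal are uniquely identifiable up to an integer constant
vector from the modulo samples: any two PBL sample vectors differing by an integer
vector differ by a constant integer vector. -/
def PBLIdentifiable (P N : ℕ) : Prop :=
  ∀ y y' : Fin N → ℝ, IsPBLSample P N y → IsPBLSample P N y' →
    (∀ n : Fin N, ∃ k : ℤ, y n - y' n = k) →
    ∃ c : ℤ, ∀ n : Fin N, y n - y' n = c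

noncomputable def pblω (N : ℕ) : ℂ := Complex.exp (2 * Real.pi * Complex.I / N)

lemma pblω_prim {N : ℕ} (hN : N ≠ 0) : IsPrimitiveRoot (pblω N) N :=
  Complex.isPrimitiveRoot_exp N hN

lemma pblω_ne_zero (N : ℕ) : pblω N ≠ 0 := Complex.exp_ne_zero _

lemma pbl_exp_eq (N n : ℕ) (p : ℤ) :
    Complex.exp (2 * Real.pi * Complex.I * n * p / N) = pblω N ^ ((n : ℤ) * p) := by
  rw [pblω, ← Complex.exp_int_mul]
  congr 1
  push_cast
  ring

lemma pbl_geom {N : ℕ} (hN : N ≠ 0) (m : ℤ) :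
    ∑ n : Fin N, pblω N ^ ((n : ℤ) * m) = if (N : ℤ) ∣ m then (N : ℂ) else 0 := by
  have hprim := pblω_prim hN
  have hne := pblω_ne_zero N
  have hx : ∀ n : Fin N, pblω N ^ ((n : ℤ) * m) = (pblω N ^ m) ^ (n : ℕ) := by
    intro n
    rw [mul_comm, zpow_mul, zpow_natCast]
  simp only [hx]
  by_cases hdvd : (N : ℤ) ∣ m
  · have h1 : pblω N ^ m = 1 := (hprim.zpow_eq_one_iff_dvd m).mpr hdvd
    simp [h1, hdvd]
  · have h1 : pblω N ^ m ≠ 1 := fun h => hdvd ((hprim.zpow_eq_one_iff_dvd m).mp h)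
    rw [if_neg hdvd, Fin.sum_univ_eq_sum_range, geom_sum_eq h1]
    have hNpow : (pblω N ^ m) ^ N = 1 := by
      rw [← zpow_natCast (pblω N ^ m), ← zpow_mul, mul_comm, zpow_mul, zpow_natCast,
        hprim.pow_eq_one, one_zpow]
    rw [hNpow]
    simp

lemma pbl_dft {N P : ℕ} (hN : N ≠ 0) (d : ℤ → ℂ) (m : ℤ) :
    ∑ n : Fin N, (∑ p ∈ Icc (-(P:ℤ)) (P:ℤ), d p * pblω N ^ ((n:ℤ) * p)) * pblω N ^ ((n:ℤ) * m)
      = ∑ p ∈ Icc (-(P:ℤ)) (P:ℤ), d p * (if (N:ℤ) ∣ p + m then (N:ℂ) else 0) := by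
  have hne := pblω_ne_zero N
  simp only [Finset.sum_mul]
  rw [Finset.sum_comm]
  refine Finset.sum_congr rfl fun p _ => ?_
  rw [← pbl_geom hN (p + m), Finset.mul_sum]
  refine Finset.sum_congr rfl fun n _ => ?_
  rw [mul_assoc, ← zpow_add₀ hne, mul_add]

lemma pbl_forward (P M : ℕ) (hP : 1 ≤ P) (hPN : P + 1 ≤ 2 ^ (M - 2)) (hM : 2 ≤ M) :
    PBLIdentifiable P (2 ^ M) := by
  have hM3 : 3 ≤ M := by
    rcases Nat.lt_or_ge M 3 with h | h
    · interval_cases M <;> simp_all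
    · exact h
  set N : ℕ := 2 ^ M with hNdef
  have hN0 : N ≠ 0 := by positivity
  have hPlt : P < 2 ^ (M - 2) := by omega
  intro y y' hy hy' hint
  obtain ⟨c, hcs, hc⟩ := hy
  obtain ⟨c', hcs', hc'⟩ := hy'
  choose k hk using hint
  set d : ℤ → ℂ := fun p => c p - c' p with hd
  have hw : ∀ n : Fin N, ((k n : ℂ)) = ∑ p ∈ Icc (-(P:ℤ)) (P:ℤ), d p * pblω N ^ ((n:ℤ)*p) := by
    intro n
    have h1 := hc n
    have h2 := hc' n
    simp only [pbl_exp_eq] at h1 h2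
    have hkc : ((k n : ℂ)) = (y n : ℂ) - (y' n : ℂ) := by
      rw [← Complex.ofReal_intCast, ← hk n, Complex.ofReal_sub]
    rw [hkc, h1, h2, ← Finset.sum_sub_distrib]
    exact Finset.sum_congr rfl fun p _ => by rw [hd]; ring
  set V : Polynomial ℚ := ∑ n : Fin N, Polynomial.C ((k n : ℚ)) * Polynomial.X ^ (n : ℕ) with hV
  have haeval : ∀ z : ℂ, Polynomial.aeval z V = ∑ n : Fin N, (k n : ℂ) * z ^ (n:ℕ) := by
    intro z
    rw [hV, map_sum]
    refine Finset.sum_congr rfl fun n _ => ?_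
    simp [Polynomial.aeval_C]
  have hkey : ∀ m : ℤ, (Polynomial.aeval (pblω N ^ m) V : ℂ)
      = ∑ p ∈ Icc (-(P:ℤ)) (P:ℤ), d p * (if (N:ℤ) ∣ p + m then (N:ℂ) else 0) := by
    intro m
    rw [haeval, ← pbl_dft hN0 d m]
    refine Finset.sum_congr rfl fun n _ => ?_
    rw [← hw n]
    congr 1
    rw [← zpow_natCast (pblω N ^ m), ← zpow_mul, mul_comm m ((n:ℕ):ℤ)]
  -- abbreviations for arithmetic
  have hXv : ∀ v : ℕ, v + 3 ≤ M → (2:ℤ) ^ v ≤ 2 ^ (M - 3) := by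
    intro v hv
    exact pow_le_pow_right₀ (by norm_num) (by omega)
  have hNX : (N:ℤ) = 8 * 2 ^ (M - 3) := by
    have h : (2:ℤ) ^ M = 2 ^ (3 + (M - 3)) := by congr 1; omega
    rw [hNdef]
    push_cast
    rw [h, pow_add]
    norm_num
  have hM1X : (2:ℤ) ^ (M - 1) = 4 * 2 ^ (M - 3) := by
    have h : (2:ℤ) ^ (M - 1) = 2 ^ (2 + (M - 3)) := by congr 1; omega
    rw [h, pow_add]
    norm_num
  have hPX : (P:ℤ) < 2 * 2 ^ (M - 3) := by
    have h1 : (P:ℤ) < (2:ℤ) ^ (M - 2) := by exact_mod_cast hPlt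
    have h : (2:ℤ) ^ (M - 2) = 2 ^ (1 + (M - 3)) := by congr 1; omega
    rw [h, pow_add, pow_one] at h1
    exact h1
  have hXpos : (0:ℤ) < 2 ^ (M - 3) := by positivity
  -- main zero claim
  have hdzero : ∀ q : ℕ, 1 ≤ q → q ≤ P → d (q:ℤ) = 0 := by
    intro q hq1 hqP
    set v : ℕ := q.factorization 2 with hv
    set u : ℕ := q / 2 ^ v with hu
    have hq0 : q ≠ 0 := by omega
    have hqvu : q = 2 ^ v * u := (Nat.ordProj_mul_ordCompl_eq_self q 2).symm
    have hu_odd : ¬ 2 ∣ u := Nat.not_dvd_ordCompl Nat.prime_two hq0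
    have h2v : 2 ^ v ≤ q := Nat.ordProj_le 2 hq0
    have hvM : v + 3 ≤ M := by
      have hlt : 2 ^ v < 2 ^ (M - 2) := lt_of_le_of_lt (le_trans h2v hqP) hPlt
      have := (Nat.pow_lt_pow_iff_right (a := 2) (by norm_num)).mp hlt
      omega
    set j : ℕ := M - v with hj
    have hj3 : 3 ≤ j := by omega
    have hvjM : v + j = M := by omega
    have hNsplit : N = 2 ^ v * 2 ^ j := by rw [hNdef, ← pow_add, hvjM]
    have hprim := pblω_prim hN0
    have hbase : IsPrimitiveRoot (pblω N ^ (2 ^ v)) (2 ^ j) :=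
      hprim.pow (Nat.pos_of_ne_zero hN0) hNsplit
    have hζ1 : IsPrimitiveRoot (pblω N ^ q) (2 ^ j) := by
      rw [hqvu, pow_mul]
      exact hbase.pow_of_coprime u
        (Nat.Coprime.pow_right j (((Nat.prime_two.coprime_iff_not_dvd).mpr hu_odd).symm))
    have hζeq : pblω N ^ (-(q:ℤ)) = (pblω N ^ q)⁻¹ := by rw [zpow_neg, zpow_natCast]
    have hζ : IsPrimitiveRoot (pblω N ^ (-(q:ℤ))) (2 ^ j) := by
      rw [hζeq]; exact hζ1.inv
    set u' : ℕ := 2 ^ (j - 1) - 1 with hu'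
    have h2j1 : (1:ℕ) ≤ 2 ^ (j - 1) := Nat.one_le_two_pow
    have hu'_odd : ¬ 2 ∣ u' := by
      have h1 : 2 ∣ 2 ^ (j - 1) := dvd_pow_self 2 (by omega)
      omega
    set kk : ℕ := 2 ^ v * u' with hkk
    have hζ2 : IsPrimitiveRoot (pblω N ^ kk) (2 ^ j) := by
      rw [hkk, pow_mul]
      exact hbase.pow_of_coprime u'
        (Nat.Coprime.pow_right j (((Nat.prime_two.coprime_iff_not_dvd).mpr hu'_odd).symm))
    have hkkval : (kk:ℤ) = 2 ^ (M - 1) - 2 ^ v := by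
      rw [hkk, hu', Nat.cast_mul, Nat.cast_sub h2j1, Nat.cast_pow, Nat.cast_pow, Nat.cast_one]
      push_cast
      rw [mul_sub, mul_one, ← pow_add, show v + (j - 1) = M - 1 by omega]
    -- evaluation at kk is zero
    have h2 : (Polynomial.aeval (pblω N ^ ((kk:ℕ):ℤ)) V : ℂ) = 0 := by
      rw [hkey]
      refine Finset.sum_eq_zero fun p hp => ?_
      rw [Finset.mem_Icc] at hp
      rw [if_neg, mul_zero]
      intro hdvd
      have hXvv := hXv v hvM
      have h2vpos : (0:ℤ) < 2 ^ v := by positivity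
      have hlow : 0 < p + (kk:ℤ) := by
        rw [hkkval, hM1X]; linarith [hp.1, hPX, hXpos, hXvv]
      have hup : p + (kk:ℤ) < (N:ℤ) := by
        rw [hkkval, hM1X, hNX]; linarith [hp.2, hPX, hXpos, h2vpos]
      have hge := Int.le_of_dvd hlow hdvd
      omega
    -- evaluation at -q is N * d q
    have h1 : (Polynomial.aeval (pblω N ^ (-(q:ℤ))) V : ℂ) = (N:ℂ) * d (q:ℤ) := by
      rw [hkey]
      rw [Finset.sum_eq_single_of_mem (q:ℤ) (Finset.mem_Icc.mpr ⟨by omega, by omega⟩)]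
      · rw [add_neg_cancel, if_pos (dvd_zero _), mul_comm]
      · intro p hp hne
        rw [Finset.mem_Icc] at hp
        rw [if_neg, mul_zero]
        intro hdvd
        have hqPz : (q:ℤ) ≤ (P:ℤ) := by exact_mod_cast hqP
        have hq0z : (0:ℤ) ≤ (q:ℤ) := Int.natCast_nonneg q
        have habs : |p + -(q:ℤ)| < (N:ℤ) := by
          rw [hNX, abs_lt]
          constructor
          · linarith [hp.1, hPX, hXpos, hqPz]
          · linarith [hp.2, hPX, hXpos, hq0z]
        have := Int.eq_zero_of_abs_lt_dvd hdvd habs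
        omega
    -- cyclotomic argument
    have hpow2pos : 0 < 2 ^ j := by positivity
    have hζ2' : IsPrimitiveRoot (pblω N ^ ((kk:ℕ):ℤ)) (2 ^ j) := by
      rw [zpow_natCast]; exact hζ2
    have hmin : minpoly ℚ (pblω N ^ ((kk:ℕ):ℤ)) ∣ V := minpoly.dvd ℚ _ h2
    have hcyc : Polynomial.cyclotomic (2 ^ j) ℚ ∣ V := by
      rw [Polynomial.cyclotomic_eq_minpoly_rat hζ2' hpow2pos]
      exact hmin
    obtain ⟨g, hg⟩ := hcyc
    have hζroot : Polynomial.aeval (pblω N ^ (-(q:ℤ))) (Polynomial.cyclotomic (2 ^ j) ℚ) = 0 := by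
      have hr := hζ.isRoot_cyclotomic hpow2pos
      rw [Polynomial.aeval_def, Polynomial.eval₂_eq_eval_map, Polynomial.map_cyclotomic]
      exact hr
    have hzero : (Polynomial.aeval (pblω N ^ (-(q:ℤ))) V : ℂ) = 0 := by
      rw [hg, map_mul, hζroot, zero_mul]
    rw [h1] at hzero
    have hNne : (N:ℂ) ≠ 0 := Nat.cast_ne_zero.mpr hN0
    exact (mul_eq_zero.mp hzero).resolve_left hNne
  -- d vanishes at nonzero p in the band
  have hdzero' : ∀ p : ℤ, p ∈ Icc (-(P:ℤ)) (P:ℤ) → p ≠ 0 → d p = 0 := by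
    intro p hp hne
    rw [Finset.mem_Icc] at hp
    have hdneg : ∀ r : ℤ, d (-r) = (starRingEnd ℂ) (d r) := by
      intro r
      show c (-r) - c' (-r) = _
      rw [hcs, hcs', ← map_sub]
    rcases lt_or_gt_of_ne hne with hneg | hpos
    · have hq : p = -((((-p).toNat) : ℕ) : ℤ) := by omega
      rw [hq, hdneg, hdzero (-p).toNat (by omega) (by omega), map_zero]
    · have hq : p = (((p.toNat) : ℕ) : ℤ) := by omega
      rw [hq, hdzero p.toNat (by omega) (by omega)]
  -- conclusion
  have n0 : Fin N := ⟨0, Nat.pos_of_ne_zero hN0⟩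
  have hconst : ∀ n : Fin N, ((k n : ℂ)) = d 0 := by
    intro n
    rw [hw n, Finset.sum_eq_single_of_mem (0:ℤ) (Finset.mem_Icc.mpr ⟨by omega, by omega⟩)]
    · rw [mul_zero, zpow_zero, mul_one]
    · intro p hp hne
      rw [hdzero' p hp hne, zero_mul]
  refine ⟨k n0, fun n => ?_⟩
  have : ((k n : ℂ)) = ((k n0 : ℂ)) := by rw [hconst n, hconst n0]
  have hkk : k n = k n0 := by exact_mod_cast this
  rw [hk n, hkk]

lemma pbl_backward (P M : ℕ) (hM : 2 ≤ M) (hle : 2 ^ (M - 2) ≤ P) :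
    ¬ PBLIdentifiable P (2 ^ M) := by
  intro hid
  set N : ℕ := 2 ^ M with hNdef
  have hN0 : N ≠ 0 := by positivity
  set q : ℕ := 2 ^ (M - 2) with hq
  have hq0 : q ≠ 0 := by positivity
  have hN4 : N = 4 * q := by
    rw [hNdef, hq, show M = 2 + (M - 2) by omega, pow_add]
    norm_num
  -- ω^q = I
  have hωq : pblω N ^ (q:ℤ) = Complex.I := by
    rw [zpow_natCast, pblω, ← Complex.exp_nat_mul]
    rw [show ((q:ℂ)) * (2 * Real.pi * Complex.I / N) = (Real.pi / 2) * Complex.I by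
      rw [hN4]
      have : ((4 * q : ℕ) : ℂ) = 4 * (q:ℂ) := by push_cast; ring
      rw [this]
      have hqc : (q:ℂ) ≠ 0 := Nat.cast_ne_zero.mpr hq0
      field_simp
      ring]
    rw [Complex.exp_mul_I]
    have harg : ((Real.pi:ℂ)/2) = ((Real.pi/2 : ℝ):ℂ) := by push_cast; ring
    rw [harg, ← Complex.ofReal_cos, ← Complex.ofReal_sin, Real.cos_pi_div_two,
      Real.sin_pi_div_two]
    simp
  -- the counterexample signal
  set y : Fin N → ℝ := fun n => (Complex.I ^ (n:ℕ)).re with hy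
  set c : ℤ → ℂ := fun p => (if p = (q:ℤ) then (1/2 : ℂ) else 0) +
      (if p = -(q:ℤ) then (1/2 : ℂ) else 0) with hc
  have hqz : (0:ℤ) < (q:ℤ) := by exact_mod_cast Nat.pos_of_ne_zero hq0
  have hysample : IsPBLSample P N y := by
    refine ⟨c, ?_, ?_⟩
    · intro p
      have hconj : (starRingEnd ℂ) (c p) = c p := by
        rw [hc]
        simp only [map_add, apply_ite (starRingEnd ℂ), map_zero]
        norm_num [Complex.conj_ofNat]
      rw [hconj, hc]
      simp only []
      have hqq : -(q:ℤ) ≠ (q:ℤ) := by omega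
      have hqq2 : (q:ℤ) ≠ -(q:ℤ) := by omega
      by_cases h1 : p = (q:ℤ)
      · subst h1
        simp [hqq, hqq2]
      · by_cases h2 : p = -(q:ℤ)
        · subst h2
          simp [hqq, hqq2]
        · have h3 : -p ≠ (q:ℤ) := by omega
          have h4 : -p ≠ -(q:ℤ) := by omega
          simp [h1, h2, h3, h4]
    · intro n
      simp only [pbl_exp_eq]
      have hsum : ∑ p ∈ Finset.Icc (-(P:ℤ)) (P:ℤ), c p * pblω N ^ ((n:ℕ) * p : ℤ)
          = (1/2 : ℂ) * pblω N ^ (((n:ℕ):ℤ) * (q:ℤ)) +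
            (1/2 : ℂ) * pblω N ^ (((n:ℕ):ℤ) * (-(q:ℤ))) := by
        rw [hc]
        simp only [add_mul, Finset.sum_add_distrib, ite_mul, zero_mul]
        rw [Finset.sum_ite_eq' (Finset.Icc (-(P:ℤ)) (P:ℤ)) ((q:ℤ)),
          Finset.sum_ite_eq' (Finset.Icc (-(P:ℤ)) (P:ℤ)) (-(q:ℤ))]
        have hmem1 : (q:ℤ) ∈ Finset.Icc (-(P:ℤ)) (P:ℤ) := by
          rw [Finset.mem_Icc]
          constructor <;> omega
        have hmem2 : (-(q:ℤ)) ∈ Finset.Icc (-(P:ℤ)) (P:ℤ) := by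
          rw [Finset.mem_Icc]
          constructor <;> omega
        rw [if_pos hmem1, if_pos hmem2]
      rw [hsum]
      have he1 : pblω N ^ (((n:ℕ):ℤ) * (q:ℤ)) = Complex.I ^ (n:ℕ) := by
        rw [mul_comm ((n:ℕ):ℤ) ((q:ℤ)), zpow_mul, hωq, zpow_natCast]
      have he2 : pblω N ^ (((n:ℕ):ℤ) * (-(q:ℤ))) = (starRingEnd ℂ) (Complex.I ^ (n:ℕ)) := by
        rw [mul_comm ((n:ℕ):ℤ) (-(q:ℤ)), zpow_mul, zpow_neg, hωq, Complex.inv_I, map_pow,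
          Complex.conj_I, zpow_natCast]
      rw [he1, he2]
      simp only [hy]
      have hac := Complex.add_conj (Complex.I ^ (n:ℕ))
      push_cast at hac
      linear_combination -hac / 2
  have hy'sample : IsPBLSample P N (fun _ => (0:ℝ)) := by
    refine ⟨fun _ => 0, by simp, by simp⟩
  have hint : ∀ n : Fin N, ∃ k : ℤ, y n - (fun _ => (0:ℝ)) n = k := by
    intro n
    simp only [hy, sub_zero]
    have h4 : Complex.I ^ (n:ℕ) = Complex.I ^ ((n:ℕ) % 4) := by
      conv_lhs => rw [← Nat.div_add_mod (n:ℕ) 4]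
      rw [pow_add, pow_mul, Complex.I_pow_four, one_pow, one_mul]
    have hlt : (n:ℕ) % 4 = 0 ∨ (n:ℕ) % 4 = 1 ∨ (n:ℕ) % 4 = 2 ∨ (n:ℕ) % 4 = 3 := by omega
    rcases hlt with h | h | h | h
    · exact ⟨1, by rw [h4, h]; norm_num⟩
    · exact ⟨0, by rw [h4, h]; norm_num⟩
    · exact ⟨-1, by rw [h4, h]; norm_num [pow_succ, Complex.I_mul_I]⟩
    · exact ⟨0, by rw [h4, h]; norm_num [pow_succ, Complex.I_mul_I]⟩
  obtain ⟨cst, hcst⟩ := hid y _ hysample hy'sample hint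
  have hN4' : 4 ≤ N := by
    rw [hN4]; omega
  have h0 := hcst ⟨0, by omega⟩
  have h1 := hcst ⟨1, by omega⟩
  simp only [hy, sub_zero] at h0 h1
  norm_num at h0 h1
  rw [← h1] at h0
  norm_num at h0

/-- for N = 2^M with M ≥ 2, the PBL samples are identifiable up to an
integer constant vector iff 2^{M−2} ≥ P+1. -/
theorem stmt15 (P M : ℕ) (hP : 1 ≤ P) (hM : 2 ≤ M) (hN : 2 * P + 1 < 2 ^ M) :
    PBLIdentifiable P (2 ^ M) ↔ P + 1 ≤ 2 ^ (M - 2) := by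
  constructor
  · intro hid
    by_contra hcon
    push_neg at hcon
    exact pbl_backward P M hM (by omega) hid
  · intro h
    exact pbl_forward P M hP h hM
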